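/- Let ω be a majorant satisfying ∫_0^δ ω(t)/t dt ≤ M ω(δ) for all sufficiently small δ > 0 and some constant M > 0, and let G be a proper subdomain of the plane such that each pair of points z, w ∈ G can be joined by a rectifiable curve γ ⊂ G with ∫_γ ω(d_G(ζ))/d_G(ζ) ds(ζ) ≤ C ω(|z−w|) for a fixed constant C = C(G,ω) > 0. Let f = h + ḡ be a harmonic mapping in G, where h and g are analytic in G. Then the following are equivalent: (i) f ∈ L_ω(G); (ii) g ∈ L_ω(G) and h ∈ L_ω(G); (iii) |g| ∈ L_ω(G) and |h| ∈ L_ω(G). -/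

import Mathlib

/-!
Everything goes through the estimate `|F'(z)| ≤ K ω(d_G(z))/d_G(z)` for the analytic functions
`F = h, g`. Such an estimate gives `F ∈ L_ω(G)` by integrating `F'` along the curves of the
hypothesis on `G`. Conversely, if `f = h + ḡ ∈ L_ω(G)`, the Cauchy formula for `h'(z)` on the
circle of radius `d_G(z)/2` can be evaluated on `f` instead of `h`, because `ḡ` integrates to zero
against `(ζ - z)⁻² dζ`; this bounds `h'`, and `g'` follows from `f̄ = g + h̄`. If only
`|h| ∈ L_ω(G)`, then `|h| ≤ |h(z)| + s` on the disc of radius `d_G(z)` about `z`, with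
`s = K ω(d_G(z))`, and the Schwarz–Pick lemma for the bound `M = |h(z)| + s` gives
`d_G(z) |h'(z)| ≤ (M² - |h(z)|²)/M ≤ 2s`.
-/

open MeasureTheory Metric Set Real
open scoped ComplexConjugate

/-- A majorant: a continuous increasing function `ω : [0,∞) → [0,∞)` with
`ω 0 = 0` such that `ω t / t` is non-increasing for `t > 0`. -/
def IsMajorant (ω : ℝ → ℝ) : Prop :=
  ContinuousOn ω (Ici 0) ∧ MonotoneOn ω (Ici 0) ∧ ω 0 = 0 ∧
    ∀ s t : ℝ, 0 < s → s ≤ t → ω t / t ≤ ω s / s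

namespace IsMajorant

variable {ω : ℝ → ℝ}

theorem mono (hω : IsMajorant ω) {s t : ℝ} (hs : 0 ≤ s) (hst : s ≤ t) : ω s ≤ ω t :=
  hω.2.1 hs (hs.trans hst) hst

theorem nonneg (hω : IsMajorant ω) {t : ℝ} (ht : 0 ≤ t) : 0 ≤ ω t :=
  hω.2.2.1 ▸ hω.mono le_rfl ht

end IsMajorant

section DistFrontier

variable {E : Type*} [NormedAddCommGroup E] [NormedSpace ℝ E] [FiniteDimensional ℝ E]
  {G : Set E} {z : E}

theorem IsOpen.infDist_frontier_eq_infDist_compl (hG : IsOpen G) (hGne : G ≠ univ) (hz : z ∈ G) :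
    infDist z (frontier G) = infDist z Gᶜ := by
  obtain ⟨y, hy, hzy⟩ := exists_mem_frontier_infDist_compl_eq_dist hz hGne
  refine le_antisymm (hzy ▸ infDist_le_dist_of_mem hy) ?_
  rw [hG.frontier_eq]
  exact infDist_le_infDist_of_subset (fun w hw => hw.2) ⟨y, hG.frontier_eq ▸ hy⟩

theorem IsOpen.infDist_frontier_pos (hG : IsOpen G) (hGne : G ≠ univ) (hz : z ∈ G) :
    0 < infDist z (frontier G) := by
  rw [hG.infDist_frontier_eq_infDist_compl hGne hz]
  exact (hG.isClosed_compl.notMem_iff_infDist_pos (nonempty_compl.2 hGne)).1 (not_not.2 hz)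

theorem IsOpen.ball_infDist_frontier_subset (hG : IsOpen G) (hGne : G ≠ univ) (hz : z ∈ G) :
    ball z (infDist z (frontier G)) ⊆ G :=
  hG.infDist_frontier_eq_infDist_compl hGne hz ▸ ball_infDist_compl_subset

end DistFrontier

theorem norm_sub_le_integral_of_norm_deriv_le {E : Type*} [NormedAddCommGroup E]
    [NormedSpace ℂ E] [CompleteSpace E] {F : ℂ → E} {W : ℂ → ℝ} {G : Set ℂ} {γ : ℝ → ℂ}
    {a b : ℝ} (hab : a < b) (hG : IsOpen G) (hF : DifferentiableOn ℂ F G)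
    (hW : ContinuousOn W G) (hFW : ∀ ζ ∈ G, ‖deriv F ζ‖ ≤ W ζ)
    (hγ : ContDiffOn ℝ 1 γ (Icc a b)) (hγG : MapsTo γ (Icc a b) G) :
    ‖F (γ b) - F (γ a)‖ ≤ ∫ t in a..b, W (γ t) * ‖deriv γ t‖ := by
  set γ' := derivWithin γ (Icc a b)
  have hγ'c : ContinuousOn γ' (Icc a b) :=
    hγ.continuousOn_derivWithin (uniqueDiffOn_Icc hab) le_rfl
  have hγ'_eq : ∀ t ∈ Ioo a b, deriv γ t = γ' t := fun t ht =>
    (derivWithin_of_mem_nhds (Icc_mem_nhds ht.1 ht.2)).symm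
  have hγ'_ae : ∀ᵐ t, t ∈ uIoc a b → deriv γ t = γ' t := by
    filter_upwards [(countable_singleton b).ae_notMem volume] with t htb ht
    rw [uIoc_of_le hab.le] at ht
    exact hγ'_eq t ⟨ht.1, lt_of_le_of_ne ht.2 htb⟩
  have hF'c : ContinuousOn (deriv F) G := (hF.analyticOnNhd hG).deriv.continuousOn
  have hint : IntervalIntegrable (fun t => γ' t • deriv F (γ t)) volume a b :=
    (hγ'c.smul (hF'c.comp hγ.continuousOn hγG)).intervalIntegrable_of_Icc hab.le
  have hFTC : ∫ t in a..b, γ' t • deriv F (γ t) = F (γ b) - F (γ a) := by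
    refine intervalIntegral.integral_eq_sub_of_hasDeriv_right_of_le hab.le
      (hF.continuousOn.comp hγ.continuousOn hγG) (fun t ht => ?_) hint
    have hγt : HasDerivAt γ (γ' t) t := hγ'_eq t ht ▸
      ((hγ.differentiableOn one_ne_zero).differentiableAt (Icc_mem_nhds ht.1 ht.2)).hasDerivAt
    exact ((hF.differentiableAt (hG.mem_nhds (hγG (Ioo_subset_Icc_self ht)))).hasDerivAt.scomp t
      hγt).hasDerivWithinAt
  calc ‖F (γ b) - F (γ a)‖ = ‖∫ t in a..b, γ' t • deriv F (γ t)‖ := by rw [hFTC]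
    _ ≤ ∫ t in a..b, W (γ t) * ‖γ' t‖ := by
        refine intervalIntegral.norm_integral_le_of_norm_le hab.le
          (ae_of_all _ fun t ht => ?_) ?_
        · rw [norm_smul, mul_comm]
          exact mul_le_mul_of_nonneg_right (hFW _ (hγG (Ioc_subset_Icc_self ht))) (norm_nonneg _)
        · exact ((hW.comp hγ.continuousOn hγG).mul hγ'c.norm).intervalIntegrable_of_Icc hab.le
    _ = ∫ t in a..b, W (γ t) * ‖deriv γ t‖ :=
        intervalIntegral.integral_congr_ae (hγ'_ae.mono fun t ht hmem => by rw [ht hmem])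

noncomputable def boundaryWeight (ω : ℝ → ℝ) (G : Set ℂ) (ζ : ℂ) : ℝ :=
  ω (infDist ζ (frontier G)) / infDist ζ (frontier G)

theorem IsMajorant.continuousOn_boundaryWeight {ω : ℝ → ℝ} (hω : IsMajorant ω) {G : Set ℂ}
    (hG : IsOpen G) (hGne : G ≠ univ) : ContinuousOn (boundaryWeight ω G) G := by
  have hd : Continuous fun ζ => infDist ζ (frontier G) := continuous_infDist_pt _
  exact (hω.1.comp hd.continuousOn fun _ _ => infDist_nonneg).div hd.continuousOn
    fun _ hζ => (hG.infDist_frontier_pos hGne hζ).ne'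

def JoinedByWeightedCurves (ω : ℝ → ℝ) (G : Set ℂ) (C : ℝ) : Prop :=
  ∀ z ∈ G, ∀ w ∈ G, ∃ γ : ℝ → ℂ, γ 0 = z ∧ γ 1 = w ∧ MapsTo γ (Icc 0 1) G ∧
    ContDiffOn ℝ 1 γ (Icc 0 1) ∧
    ∫ t in (0 : ℝ)..1, boundaryWeight ω G (γ t) * ‖deriv γ t‖ ≤ C * ω (dist z w)

/-- `F ∈ L_ω(s)`. -/
def MajorantLipschitzOn {α E : Type*} [PseudoMetricSpace α] [SeminormedAddCommGroup E]
    (ω : ℝ → ℝ) (F : α → E) (s : Set α) : Prop :=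
  ∃ K > (0 : ℝ), ∀ z ∈ s, ∀ w ∈ s, ‖F z - F w‖ ≤ K * ω (dist z w)

namespace MajorantLipschitzOn

variable {α E : Type*} [PseudoMetricSpace α] [SeminormedAddCommGroup E] {ω : ℝ → ℝ} {s : Set α}
  {F F' : α → E}

theorem of_forall_le (hω : IsMajorant ω) (K : ℝ)
    (hF : ∀ z ∈ s, ∀ w ∈ s, ‖F z - F w‖ ≤ K * ω (dist z w)) : MajorantLipschitzOn ω F s :=
  ⟨max K 1, by positivity, fun z hz w hw =>
    (hF z hz w hw).trans (mul_le_mul_of_nonneg_right (le_max_left _ _) (hω.nonneg dist_nonneg))⟩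

theorem norm (hF : MajorantLipschitzOn ω F s) : MajorantLipschitzOn ω (fun z => ‖F z‖) s :=
  let ⟨K, hK, hF⟩ := hF
  ⟨K, hK, fun z hz w hw => (abs_norm_sub_norm_le _ _).trans (hF z hz w hw)⟩

theorem congr (hF : MajorantLipschitzOn ω F s) (hFF' : EqOn F F' s) :
    MajorantLipschitzOn ω F' s :=
  let ⟨K, hK, hF⟩ := hF
  ⟨K, hK, fun z hz w hw => hFF' hz ▸ hFF' hw ▸ hF z hz w hw⟩

theorem add (hF : MajorantLipschitzOn ω F s) (hF' : MajorantLipschitzOn ω F' s) :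
    MajorantLipschitzOn ω (F + F') s :=
  let ⟨K, hK, hF⟩ := hF
  let ⟨K', hK', hF'⟩ := hF'
  ⟨K + K', by positivity, fun z hz w hw => by
    rw [Pi.add_apply, Pi.add_apply, add_sub_add_comm, add_mul]
    exact (norm_add_le _ _).trans (add_le_add (hF z hz w hw) (hF' z hz w hw))⟩

theorem star [StarAddMonoid E] [NormedStarGroup E] (hF : MajorantLipschitzOn ω F s) :
    MajorantLipschitzOn ω (fun z => star (F z)) s :=
  let ⟨K, hK, hF⟩ := hF
  ⟨K, hK, fun z hz w hw => by rw [← star_sub, norm_star]; exact hF z hz w hw⟩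

theorem of_norm_deriv_le {G : Set ℂ} {C : ℝ} (hω : IsMajorant ω) (hG : IsOpen G)
    (hGne : G ≠ univ) (hGC : JoinedByWeightedCurves ω G C) {F : ℂ → ℂ}
    (hF : DifferentiableOn ℂ F G) {K : ℝ} (hK : 0 ≤ K)
    (hF' : ∀ z ∈ G, ‖deriv F z‖ ≤ K * boundaryWeight ω G z) : MajorantLipschitzOn ω F G := by
  refine of_forall_le hω (K * C) fun z hz w hw => ?_
  obtain ⟨γ, rfl, rfl, hγG, hγ, hlen⟩ := hGC z hz w hw
  calc ‖F (γ 0) - F (γ 1)‖ = ‖F (γ 1) - F (γ 0)‖ := norm_sub_rev _ _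
    _ ≤ ∫ t in (0 : ℝ)..1, K * boundaryWeight ω G (γ t) * ‖deriv γ t‖ :=
        norm_sub_le_integral_of_norm_deriv_le zero_lt_one hG hF
          (continuousOn_const.mul (hω.continuousOn_boundaryWeight hG hGne)) hF' hγ hγG
    _ = K * ∫ t in (0 : ℝ)..1, boundaryWeight ω G (γ t) * ‖deriv γ t‖ := by
        simp_rw [mul_assoc]; exact intervalIntegral.integral_const_mul _ _
    _ ≤ K * C * ω (dist (γ 0) (γ 1)) := by
        rw [mul_assoc]; exact mul_le_mul_of_nonneg_left hlen hK

end MajorantLipschitzOn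

/-- On the circle `|ζ - c| = R` one has `(ζ - c)⁻² dζ = -R⁻² conj dζ`. -/
theorem circleIntegral_one_div_sub_center_sq_smul_conj (c : ℂ) {R : ℝ} (hR : R ≠ 0)
    (g : ℂ → ℂ) :
    ∮ ζ in C(c, R), (1 / (ζ - c) ^ 2) • conj (g ζ) =
      -((R : ℂ) ^ 2)⁻¹ * conj (∮ ζ in C(c, R), g ζ) := by
  simp only [circleIntegral, deriv_circleMap, circleMap_sub_center, smul_eq_mul]
  rw [← intervalIntegral.intervalIntegral_conj, ← intervalIntegral.integral_const_mul]
  refine intervalIntegral.integral_congr fun θ _ => ?_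
  have hu : conj (Complex.exp (θ * Complex.I)) = (Complex.exp (θ * Complex.I))⁻¹ := by
    rw [← Complex.exp_conj, ← Complex.exp_neg]; simp
  simp only [circleMap, zero_add, map_mul, Complex.conj_ofReal, Complex.conj_I, hu]
  have hexp := Complex.exp_ne_zero (θ * Complex.I)
  have hR' : (R : ℂ) ≠ 0 := by exact_mod_cast hR
  field_simp

theorem mul_norm_deriv_le_of_forall_mem_sphere_norm_sub_le {h g : ℂ → ℂ} {c : ℂ} {R B : ℝ}
    (hR : 0 < R) (hh : DifferentiableOn ℂ h (closedBall c R))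
    (hg : DifferentiableOn ℂ g (closedBall c R))
    (hB : ∀ ζ ∈ sphere c R, ‖h ζ + conj (g ζ) - (h c + conj (g c))‖ ≤ B) :
    R * ‖deriv h c‖ ≤ B := by
  set k : ℂ → ℂ := fun ζ => 1 / (ζ - c) ^ 2
  have hk : ContinuousOn k (sphere c R) :=
    continuousOn_const.div ((continuousOn_id.sub continuousOn_const).pow 2) fun ζ hζ =>
      pow_ne_zero 2 (sub_ne_zero.2 (ne_of_mem_sphere hζ hR.ne'))
  have hh' := hh.sub_const (h c)
  have hg' := hg.sub_const (g c)
  have hcauchy : ∮ ζ in C(c, R), k ζ • (h ζ - h c) = (2 * π * Complex.I) • deriv h c := by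
    rw [hh'.deriv_eq_smul_circleIntegral hR, deriv_sub_const]
  have hvanish : ∮ ζ in C(c, R), k ζ • conj (g ζ - g c) = 0 := by
    rw [circleIntegral_one_div_sub_center_sq_smul_conj c hR.ne',
      (hg'.mono closure_ball_subset_closedBall).diffContOnCl.circleIntegral_eq_zero hR.le,
      map_zero, mul_zero]
  have hsplit : ∮ ζ in C(c, R), k ζ • (h ζ + conj (g ζ) - (h c + conj (g c))) =
      (2 * π * Complex.I) • deriv h c := by
    simp_rw [add_sub_add_comm, ← map_sub, smul_add]
    rw [circleIntegral.integral_add, hcauchy, hvanish, add_zero]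
    · exact (hk.smul (hh'.continuousOn.mono sphere_subset_closedBall)).circleIntegrable hR.le
    · exact (hk.smul (Complex.continuous_conj.comp_continuousOn
        (hg'.continuousOn.mono sphere_subset_closedBall))).circleIntegrable hR.le
  have hbound := circleIntegral.norm_integral_le_of_norm_le_const (c := c) hR.le
    (f := fun ζ => k ζ • (h ζ + conj (g ζ) - (h c + conj (g c)))) (C := B / R ^ 2)
    fun ζ hζ => by
      rw [norm_smul, norm_div, norm_one, norm_pow, mem_sphere_iff_norm.1 hζ, one_div,
        ← div_eq_inv_mul]
      exact div_le_div_of_nonneg_right (hB ζ hζ) (by positivity)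
  rw [hsplit, norm_smul, Complex.norm_mul, Complex.norm_mul, Complex.norm_I, Complex.norm_real,
    Complex.norm_ofNat, Real.norm_of_nonneg pi_pos.le, mul_one] at hbound
  have h1 : ‖deriv h c‖ ≤ R * (B / R ^ 2) :=
    le_of_mul_le_mul_left (by linarith) two_pi_pos
  calc R * ‖deriv h c‖ ≤ R * (R * (B / R ^ 2)) := mul_le_mul_of_nonneg_left h1 hR.le
    _ = B := by field_simp

theorem normSq_sq_sub_conj_mul_sub (M : ℝ) (a ζ : ℂ) :
    Complex.normSq ((M : ℂ) ^ 2 - conj a * ζ) - M ^ 2 * Complex.normSq (ζ - a) =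
      (M ^ 2 - Complex.normSq a) * (M ^ 2 - Complex.normSq ζ) := by
  simp only [Complex.normSq_apply, Complex.sub_re, Complex.sub_im, Complex.mul_re,
    Complex.mul_im, Complex.conj_re, Complex.conj_im, ← Complex.ofReal_pow, Complex.ofReal_re,
    Complex.ofReal_im]
  ring

theorem mul_norm_sub_le_norm_sq_sub_conj_mul {M : ℝ} {a ζ : ℂ} (ha : ‖a‖ ≤ M) (hζ : ‖ζ‖ ≤ M) :
    M * ‖ζ - a‖ ≤ ‖(M : ℂ) ^ 2 - conj a * ζ‖ := by
  refine le_of_sq_le_sq ?_ (norm_nonneg _)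
  rw [mul_pow, Complex.sq_norm, Complex.sq_norm, ← sub_nonneg, normSq_sq_sub_conj_mul_sub,
    ← Complex.sq_norm, ← Complex.sq_norm]
  exact mul_nonneg (sub_nonneg.2 (pow_le_pow_left₀ (norm_nonneg _) ha 2))
    (sub_nonneg.2 (pow_le_pow_left₀ (norm_nonneg _) hζ 2))

/-- The Schwarz–Pick lemma for maps into the closed disc of radius `M`, proved by composing with
the automorphism `ζ ↦ M (ζ - a) / (M² - ā ζ)` of that disc. -/
theorem mul_mul_norm_deriv_le_sq_sub_sq {H : ℂ → ℂ} {c : ℂ} {ρ M : ℝ} (hρ : 0 < ρ)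
    (hH : DifferentiableOn ℂ H (ball c ρ)) (hHM : ∀ w ∈ ball c ρ, ‖H w‖ ≤ M) (hc : ‖H c‖ < M) :
    M * ρ * ‖deriv H c‖ ≤ M ^ 2 - ‖H c‖ ^ 2 := by
  set a := H c
  have hM : 0 < M := (norm_nonneg a).trans_lt hc
  have hMa : 0 < M ^ 2 - ‖a‖ ^ 2 := by nlinarith [norm_nonneg a]
  have hden : ∀ ζ : ℂ, ‖ζ‖ ≤ M → (M : ℂ) ^ 2 - conj a * ζ ≠ 0 := fun ζ hζ h0 => by
    have hlt : ‖conj a * ζ‖ < M ^ 2 := by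
      rw [norm_mul, RCLike.norm_conj]; nlinarith [norm_nonneg a, norm_nonneg ζ]
    rw [← sub_eq_zero.1 h0, ← Complex.ofReal_pow, Complex.norm_real,
      Real.norm_of_nonneg (sq_nonneg M)] at hlt
    exact lt_irrefl _ hlt
  set Φ : ℂ → ℂ := fun w => M * (H w - a) / ((M : ℂ) ^ 2 - conj a * H w)
  have hΦd : DifferentiableOn ℂ Φ (ball c ρ) :=
    ((hH.sub_const a).const_mul _).div ((differentiableOn_const _).sub (hH.const_mul _))
      fun w hw => hden _ (hHM w hw)
  have hΦmaps : MapsTo Φ (ball c ρ) (closedBall (Φ c) 1) := fun w hw => by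
    have hden_pos := norm_pos_iff.2 (hden _ (hHM w hw))
    rw [show Φ c = 0 by simp [Φ, a], mem_closedBall_zero_iff, norm_div, norm_mul,
      Complex.norm_real, Real.norm_of_nonneg hM.le, div_le_one hden_pos]
    exact mul_norm_sub_le_norm_sq_sub_conj_mul hc.le (hHM w hw)
  have hH' : HasDerivAt H (deriv H c) c :=
    (hH.differentiableAt (isOpen_ball.mem_nhds (mem_ball_self hρ))).hasDerivAt
  have hΦ' : HasDerivAt Φ (M * deriv H c / ((M : ℂ) ^ 2 - conj a * a)) c := by
    refine (((hH'.sub_const a).const_mul (M : ℂ)).div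
      ((hH'.const_mul (conj a)).const_sub ((M : ℂ) ^ 2)) (hden a hc.le)).congr_deriv ?_
    rw [show H c = a from rfl, sub_self, mul_zero, zero_mul, sub_zero]
    field_simp [hden a hc.le]
  have hschwarz := Complex.norm_deriv_le_div_of_mapsTo_ball hΦd hΦmaps hρ
  rw [hΦ'.deriv, Complex.conj_mul', norm_div, norm_mul, Complex.norm_real,
    Real.norm_of_nonneg hM.le, ← Complex.ofReal_pow, ← Complex.ofReal_pow, ← Complex.ofReal_sub,
    Complex.norm_real, Real.norm_of_nonneg hMa.le, div_le_div_iff₀ hMa hρ] at hschwarz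
  linarith

theorem mul_norm_deriv_le_of_forall_norm_le_add {h : ℂ → ℂ} {z : ℂ} {ρ s : ℝ} (hρ : 0 < ρ)
    (hh : DifferentiableOn ℂ h (ball z ρ)) (hs : ∀ w ∈ ball z ρ, ‖h w‖ ≤ ‖h z‖ + s) :
    ρ * ‖deriv h z‖ ≤ 2 * s := by
  have hs0 : 0 ≤ s := by linarith [hs z (mem_ball_self hρ)]
  -- Schwarz–Pick needs `‖h z‖ < M`, so `s` is replaced by any `t / 2 > s`.
  refine le_of_forall_gt_imp_ge_of_dense fun t ht => ?_
  have hM := mul_mul_norm_deriv_le_sq_sub_sq hρ hh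
    (fun w hw => (hs w hw).trans (by linarith : ‖h z‖ + s ≤ ‖h z‖ + t / 2))
    (by linarith : ‖h z‖ < ‖h z‖ + t / 2)
  have hM0 : 0 < ‖h z‖ + t / 2 := by linarith [norm_nonneg (h z)]
  refine le_of_mul_le_mul_left ?_ hM0
  nlinarith [norm_nonneg (h z)]

namespace MajorantLipschitzOn

variable {ω : ℝ → ℝ} {G : Set ℂ} {C : ℝ}

theorem analyticPart (hω : IsMajorant ω) (hG : IsOpen G) (hGne : G ≠ univ)
    (hGC : JoinedByWeightedCurves ω G C) {f h g : ℂ → ℂ} (hh : DifferentiableOn ℂ h G)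
    (hg : DifferentiableOn ℂ g G) (hfhg : EqOn f (fun z => h z + conj (g z)) G)
    (hf : MajorantLipschitzOn ω f G) : MajorantLipschitzOn ω h G := by
  obtain ⟨K, hK, hf⟩ := hf
  refine of_norm_deriv_le hω hG hGne hGC hh (by positivity : (0 : ℝ) ≤ 2 * K) fun z hz => ?_
  set d := infDist z (frontier G)
  have hd : 0 < d := hG.infDist_frontier_pos hGne hz
  have hR : closedBall z (d / 2) ⊆ G :=
    (closedBall_subset_ball (half_lt_self hd)).trans (hG.ball_infDist_frontier_subset hGne hz)
  have hB := mul_norm_deriv_le_of_forall_mem_sphere_norm_sub_le (half_pos hd) (hh.mono hR)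
    (hg.mono hR) (B := K * ω d) fun ζ hζ => by
      have hζG := hR (sphere_subset_closedBall hζ)
      rw [show h ζ + conj (g ζ) - (h z + conj (g z)) = f ζ - f z by rw [hfhg hζG, hfhg hz]]
      refine (hf ζ hζG z hz).trans (mul_le_mul_of_nonneg_left (hω.mono dist_nonneg ?_) hK.le)
      rw [mem_sphere.1 hζ]; linarith
  rw [boundaryWeight, ← mul_div_assoc, le_div_iff₀ hd]
  linarith

theorem coanalyticPart (hω : IsMajorant ω) (hG : IsOpen G) (hGne : G ≠ univ)
    (hGC : JoinedByWeightedCurves ω G C) {f h g : ℂ → ℂ} (hh : DifferentiableOn ℂ h G)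
    (hg : DifferentiableOn ℂ g G) (hfhg : EqOn f (fun z => h z + conj (g z)) G)
    (hf : MajorantLipschitzOn ω f G) : MajorantLipschitzOn ω g G :=
  analyticPart hω hG hGne hGC hg hh (f := fun z => conj (f z))
    (fun z hz => by simp [hfhg hz, add_comm]) hf.star

theorem of_norm (hω : IsMajorant ω) (hG : IsOpen G) (hGne : G ≠ univ)
    (hGC : JoinedByWeightedCurves ω G C) {F : ℂ → ℂ} (hF : DifferentiableOn ℂ F G)
    (hFn : MajorantLipschitzOn ω (fun z => ‖F z‖) G) : MajorantLipschitzOn ω F G := by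
  obtain ⟨K, hK, hFn⟩ := hFn
  refine of_norm_deriv_le hω hG hGne hGC hF (by positivity : (0 : ℝ) ≤ 2 * K) fun z hz => ?_
  set d := infDist z (frontier G)
  have hd : 0 < d := hG.infDist_frontier_pos hGne hz
  have hball := hG.ball_infDist_frontier_subset hGne hz
  have hB := mul_norm_deriv_le_of_forall_norm_le_add hd (hF.mono hball) (s := K * ω d)
    fun w hw => by
      have hω_le : ω (dist w z) ≤ ω d := hω.mono dist_nonneg (mem_ball.1 hw).le
      linarith [Real.le_norm_self (‖F w‖ - ‖F z‖), hFn w (hball hw) z hz,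
        mul_le_mul_of_nonneg_left hω_le hK.le]
  rw [boundaryWeight, ← mul_div_assoc, le_div_iff₀ hd]
  linarith

end MajorantLipschitzOn

theorem stmt7_general (ω : ℝ → ℝ) (hω : IsMajorant ω)
    (G : Set ℂ) (hGopen : IsOpen G) (hGproper : G ≠ univ)
    (C : ℝ)
    (hcurve : ∀ z ∈ G, ∀ w ∈ G, ∃ γ : ℝ → ℂ,
      γ 0 = z ∧ γ 1 = w ∧ (∀ t ∈ Icc (0:ℝ) 1, γ t ∈ G) ∧
      ContDiffOn ℝ 1 γ (Icc (0:ℝ) 1) ∧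
      (∫ t in (0:ℝ)..1,
          ω (infDist (γ t) (frontier G)) / infDist (γ t) (frontier G) * ‖deriv γ t‖)
        ≤ C * ω (dist z w))
    (h g f : ℂ → ℂ) (hh : DifferentiableOn ℂ h G) (hg : DifferentiableOn ℂ g G)
    (hfdec : ∀ z ∈ G, f z = h z + (starRingEnd ℂ) (g z)) :
    ((∃ K > (0 : ℝ), ∀ z ∈ G, ∀ w ∈ G, ‖f z - f w‖ ≤ K * ω (dist z w)) ↔
      ((∃ K > (0 : ℝ), ∀ z ∈ G, ∀ w ∈ G, ‖g z - g w‖ ≤ K * ω (dist z w)) ∧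
        (∃ K > (0 : ℝ), ∀ z ∈ G, ∀ w ∈ G, ‖h z - h w‖ ≤ K * ω (dist z w)))) ∧
    (((∃ K > (0 : ℝ), ∀ z ∈ G, ∀ w ∈ G, ‖g z - g w‖ ≤ K * ω (dist z w)) ∧
        (∃ K > (0 : ℝ), ∀ z ∈ G, ∀ w ∈ G, ‖h z - h w‖ ≤ K * ω (dist z w))) ↔
      ((∃ K > (0 : ℝ), ∀ z ∈ G, ∀ w ∈ G, abs (‖g z‖ - ‖g w‖) ≤ K * ω (dist z w)) ∧
        (∃ K > (0 : ℝ), ∀ z ∈ G, ∀ w ∈ G, abs (‖h z‖ - ‖h w‖) ≤ K * ω (dist z w)))) := by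
  have hGC : JoinedByWeightedCurves ω G C := hcurve
  change (MajorantLipschitzOn ω f G ↔ MajorantLipschitzOn ω g G ∧ MajorantLipschitzOn ω h G) ∧
    (MajorantLipschitzOn ω g G ∧ MajorantLipschitzOn ω h G ↔
      MajorantLipschitzOn ω (fun z => ‖g z‖) G ∧ MajorantLipschitzOn ω (fun z => ‖h z‖) G)
  refine ⟨⟨fun hf => ⟨?_, ?_⟩, fun ⟨hgL, hhL⟩ => ?_⟩,
    ⟨fun ⟨hgL, hhL⟩ => ⟨hgL.norm, hhL.norm⟩, fun ⟨hgL, hhL⟩ => ⟨?_, ?_⟩⟩⟩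
  · exact .coanalyticPart hω hGopen hGproper hGC hh hg hfdec hf
  · exact .analyticPart hω hGopen hGproper hGC hh hg hfdec hf
  · exact (hhL.add hgL.star).congr fun z hz => (hfdec z hz).symm
  · exact .of_norm hω hGopen hGproper hGC hg hgL
  · exact .of_norm hω hGopen hGproper hGC hh hhL

/-- Theorem 3: let `ω` be a majorant satisfying
`∫₀^δ ω(t)/t dt ≤ M ω(δ)` for all small `δ > 0`, and let `G` be a proper subdomain of
the plane such that any two points of `G` are joined by a rectifiable curve `γ ⊆ G`
with `∫_γ ω(d_G(ζ))/d_G(ζ) ds(ζ) ≤ C ω(|z-w|)`. If `f = h + ḡ` is harmonic in `G`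
with `h, g` analytic in `G`, then
`f ∈ L_ω(G) ↔ g, h ∈ L_ω(G) ↔ |g|, |h| ∈ L_ω(G)`. -/
theorem stmt7 (ω : ℝ → ℝ) (hω : IsMajorant ω)
    (M : ℝ) (hM : 0 < M) (δ₀ : ℝ) (hδ₀ : 0 < δ₀)
    (hωint : ∀ δ : ℝ, 0 < δ → δ < δ₀ → (∫ t in (0:ℝ)..δ, ω t / t) ≤ M * ω δ)
    (G : Set ℂ) (hGopen : IsOpen G) (hGconn : IsConnected G) (hGproper : G ≠ univ)
    (C : ℝ) (hC : 0 < C)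
    (hcurve : ∀ z ∈ G, ∀ w ∈ G, ∃ γ : ℝ → ℂ,
      γ 0 = z ∧ γ 1 = w ∧ (∀ t ∈ Icc (0:ℝ) 1, γ t ∈ G) ∧
      ContDiffOn ℝ 1 γ (Icc (0:ℝ) 1) ∧
      (∫ t in (0:ℝ)..1,
          ω (infDist (γ t) (frontier G)) / infDist (γ t) (frontier G) * ‖deriv γ t‖)
        ≤ C * ω (dist z w))
    (h g f : ℂ → ℂ) (hh : DifferentiableOn ℂ h G) (hg : DifferentiableOn ℂ g G)
    (hfdec : ∀ z ∈ G, f z = h z + (starRingEnd ℂ) (g z)) :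
    ((∃ K > (0 : ℝ), ∀ z ∈ G, ∀ w ∈ G, ‖f z - f w‖ ≤ K * ω (dist z w)) ↔
      ((∃ K > (0 : ℝ), ∀ z ∈ G, ∀ w ∈ G, ‖g z - g w‖ ≤ K * ω (dist z w)) ∧
        (∃ K > (0 : ℝ), ∀ z ∈ G, ∀ w ∈ G, ‖h z - h w‖ ≤ K * ω (dist z w)))) ∧
    (((∃ K > (0 : ℝ), ∀ z ∈ G, ∀ w ∈ G, ‖g z - g w‖ ≤ K * ω (dist z w)) ∧
        (∃ K > (0 : ℝ), ∀ z ∈ G, ∀ w ∈ G, ‖h z - h w‖ ≤ K * ω (dist z w))) ↔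
      ((∃ K > (0 : ℝ), ∀ z ∈ G, ∀ w ∈ G, abs (‖g z‖ - ‖g w‖) ≤ K * ω (dist z w)) ∧
        (∃ K > (0 : ℝ), ∀ z ∈ G, ∀ w ∈ G, abs (‖h z‖ - ‖h w‖) ≤ K * ω (dist z w)))) :=
  stmt7_general ω hω G hGopen hGproper C hcurve h g f hh hg hfdec
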